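/- arXiv:1907.06634 — 5 statements merged into one kernel-verified Lean document; each statement's English description precedes it below -/
import Mathlib

section
/- Let X, Y : (0,∞) → ℂ, let H, ω ∈ ℝ and γ̄ > 0, and suppose that t ↦ e^{(H+iω)t} X(e^{−t}γ̄) and t ↦ e^{(H+iω)t} Y(e^{−t}γ̄) are both Lebesgue integrable on ℝ, so that the Lamperti dilation spectrums X̃(ω, γ̄) and Ỹ(ω, γ̄) exist. If X̃(ω, γ̄) = Ỹ(ω, γ̄) ≠ 0, then for all dilations λ₁, λ₂ > 0, X̃(ω, λ₁γ̄) / Ỹ(ω, λ₂γ̄) = (λ₁/λ₂)^{H+iω}, where the complex power is taken of the positive real λ₁/λ₂. -/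
/-!
The Lamperti dilation spectrum is dilation covariant: the substitution `t ↦ t - log λ`,
under which Lebesgue measure on `ℝ` is invariant, turns `X̃(ω, λγ̄)` into `λ^{H+iω} X̃(ω, γ̄)`.
Dividing the two covariance identities, the common nonzero factor `X̃(ω, γ̄) = Ỹ(ω, γ̄)` cancels.
-/

open MeasureTheory

noncomputable def lampertiDilationSpectrum (X : ℝ → ℂ) (s : ℂ) (γ : ℝ) : ℂ :=
  ∫ t : ℝ, Complex.exp (s * t) * X (Real.exp (-t) * γ)

-- When the integrand is not integrable, both sides are the junk value `0`.
theorem lampertiDilationSpectrum_mul_left (X : ℝ → ℂ) (s : ℂ) (γ : ℝ) {lam : ℝ}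
    (hlam : 0 < lam) :
    lampertiDilationSpectrum X s (lam * γ) = (lam : ℂ) ^ s * lampertiDilationSpectrum X s γ := by
  have hshift (t : ℝ) : Complex.exp (s * t) * X (Real.exp (-t) * (lam * γ)) =
      (lam : ℂ) ^ s *
        (Complex.exp (s * ↑(t - Real.log lam)) * X (Real.exp (-(t - Real.log lam)) * γ)) := by
    have harg : Real.exp (-(t - Real.log lam)) * γ = Real.exp (-t) * (lam * γ) := by
      rw [neg_sub', sub_neg_eq_add, Real.exp_add, Real.exp_log hlam, mul_assoc]
    have hexp : (lam : ℂ) ^ s * Complex.exp (s * ↑(t - Real.log lam)) = Complex.exp (s * t) := by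
      rw [Complex.cpow_def_of_ne_zero (by exact_mod_cast hlam.ne'), ← Complex.ofReal_log hlam.le,
        ← Complex.exp_add]
      push_cast
      ring_nf
    rw [harg, ← hexp, mul_assoc]
  simp only [lampertiDilationSpectrum, hshift, integral_const_mul]
  rw [integral_sub_right_eq_self (fun u : ℝ => Complex.exp (s * u) * X (Real.exp (-u) * γ))]

theorem lamperti_dilation_spectrum_similarity_general
    (X Y : ℝ → ℂ) (H ω γbar : ℝ)
    (heq : (∫ t : ℝ, Complex.exp (((H : ℂ) + (ω : ℂ) * Complex.I) * (t : ℂ)) *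
              X (Real.exp (-t) * γbar))
         = ∫ t : ℝ, Complex.exp (((H : ℂ) + (ω : ℂ) * Complex.I) * (t : ℂ)) *
              Y (Real.exp (-t) * γbar))
    (hne : (∫ t : ℝ, Complex.exp (((H : ℂ) + (ω : ℂ) * Complex.I) * (t : ℂ)) *
              X (Real.exp (-t) * γbar)) ≠ 0) :
    ∀ lam₁ lam₂ : ℝ, 0 < lam₁ → 0 < lam₂ →
      (∫ t : ℝ, Complex.exp (((H : ℂ) + (ω : ℂ) * Complex.I) * (t : ℂ)) *
          X (Real.exp (-t) * (lam₁ * γbar)))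
        / (∫ t : ℝ, Complex.exp (((H : ℂ) + (ω : ℂ) * Complex.I) * (t : ℂ)) *
          Y (Real.exp (-t) * (lam₂ * γbar)))
      = ((lam₁ / lam₂ : ℝ) : ℂ) ^ ((H : ℂ) + (ω : ℂ) * Complex.I) := by
  intro lam₁ lam₂ h₁ h₂
  set s : ℂ := (H : ℂ) + (ω : ℂ) * Complex.I
  change lampertiDilationSpectrum X s (lam₁ * γbar) / lampertiDilationSpectrum Y s (lam₂ * γbar) = _
  change lampertiDilationSpectrum X s γbar = lampertiDilationSpectrum Y s γbar at heq
  change lampertiDilationSpectrum X s γbar ≠ 0 at hne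
  rw [lampertiDilationSpectrum_mul_left X s γbar h₁, lampertiDilationSpectrum_mul_left Y s γbar h₂,
    ← heq, mul_div_mul_right _ _ hne, Complex.ofReal_div,
    Complex.div_cpow_ofReal_nonneg h₁.le h₂.le]

/-- **Similarity between Lamperti dilation spectrums.**
If the Lamperti dilation spectrums of two average performance measures `X`, `Y`
exist at `γ̄` and coincide (with nonzero common value), then for all dilations
`λ₁, λ₂ > 0` one has `X̃(ω, λ₁γ̄) / Ỹ(ω, λ₂γ̄) = (λ₁/λ₂)^{H+iω}`. -/
theorem lamperti_dilation_spectrum_similarity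
    (X Y : ℝ → ℂ) (H ω γbar : ℝ) (hγ : 0 < γbar)
    (hX : Integrable (fun t : ℝ =>
      Complex.exp (((H : ℂ) + (ω : ℂ) * Complex.I) * (t : ℂ)) *
        X (Real.exp (-t) * γbar)))
    (hY : Integrable (fun t : ℝ =>
      Complex.exp (((H : ℂ) + (ω : ℂ) * Complex.I) * (t : ℂ)) *
        Y (Real.exp (-t) * γbar)))
    (heq : (∫ t : ℝ, Complex.exp (((H : ℂ) + (ω : ℂ) * Complex.I) * (t : ℂ)) *
              X (Real.exp (-t) * γbar))
         = ∫ t : ℝ, Complex.exp (((H : ℂ) + (ω : ℂ) * Complex.I) * (t : ℂ)) *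
              Y (Real.exp (-t) * γbar))
    (hne : (∫ t : ℝ, Complex.exp (((H : ℂ) + (ω : ℂ) * Complex.I) * (t : ℂ)) *
              X (Real.exp (-t) * γbar)) ≠ 0) :
    ∀ lam₁ lam₂ : ℝ, 0 < lam₁ → 0 < lam₂ →
      (∫ t : ℝ, Complex.exp (((H : ℂ) + (ω : ℂ) * Complex.I) * (t : ℂ)) *
          X (Real.exp (-t) * (lam₁ * γbar)))
        / (∫ t : ℝ, Complex.exp (((H : ℂ) + (ω : ℂ) * Complex.I) * (t : ℂ)) *
          Y (Real.exp (-t) * (lam₂ * γbar)))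
      = ((lam₁ / lam₂ : ℝ) : ℂ) ^ ((H : ℂ) + (ω : ℂ) * Complex.I) :=
  lamperti_dilation_spectrum_similarity_general X Y H ω γbar heq hne
end

section
/- Let a > 0 and b > 0 be real numbers and let s ∈ ℂ with 0 < Re(s) < b. Then ∫₀^∞ λ^{−s−1} · γ̂(b, aλ) dλ = a^{s} · Γ(b−s) / s, where γ̂(b, y) = ∫₀^y t^{b−1} e^{−t} dt is the lower incomplete Gamma function, Γ is the complex Gamma function, and λ^{−s−1}, a^{s} denote complex powers of positive reals. -/
/-!
The substitution `λ ↦ λ / a` reduces the integral to `a ^ s` times the Mellin transform of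
`γ̂(b, ·)` at `-s`. Integrate that by parts against `λ ^ (-s) / (-s)`: the boundary terms vanish because `γ̂(b, y) = O(y ^ b)` at `0` and `γ̂(b, y) ≤ Γ(b)`, and since
`∂_y γ̂(b, y) = y ^ (b - 1) e ^ (-y)` the remaining integral is `Γ(b - s) / s`.
-/

open MeasureTheory Real

/-- The lower incomplete Gamma function `γ̂(b, y) = ∫₀^y t^{b−1} e^{−t} dt`. -/
noncomputable def lowerIncGamma (b y : ℝ) : ℝ :=
  ∫ t in (0 : ℝ)..y, t ^ (b - 1) * Real.exp (-t)

open Set Filter Topology Asymptotics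

section LowerIncGamma

variable {b : ℝ}

lemma intervalIntegrable_rpow_mul_exp_neg (hb : 0 < b) (x y : ℝ) :
    IntervalIntegrable (fun t : ℝ => t ^ (b - 1) * Real.exp (-t)) volume x y :=
  (intervalIntegral.intervalIntegrable_rpow' (by linarith)).mul_continuousOn (by fun_prop)

lemma continuous_lowerIncGamma (hb : 0 < b) : Continuous (lowerIncGamma b) :=
  intervalIntegral.continuous_primitive (intervalIntegrable_rpow_mul_exp_neg hb) 0

lemma hasDerivAt_lowerIncGamma (hb : 0 < b) {y : ℝ} (hy : 0 < y) :
    HasDerivAt (lowerIncGamma b) (y ^ (b - 1) * Real.exp (-y)) y := by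
  have hcont : ContinuousOn (fun t : ℝ => t ^ (b - 1) * Real.exp (-t)) (Ioi 0) :=
    fun t ht => ((continuousAt_rpow_const t (b - 1) (Or.inl (ne_of_gt ht))).mul
      (by fun_prop)).continuousWithinAt
  exact intervalIntegral.integral_hasDerivAt_right (intervalIntegrable_rpow_mul_exp_neg hb 0 y)
    (hcont.stronglyMeasurableAtFilter isOpen_Ioi y hy) (hcont.continuousAt (Ioi_mem_nhds hy))

lemma lowerIncGamma_nonneg {y : ℝ} (hy : 0 ≤ y) : 0 ≤ lowerIncGamma b y :=
  intervalIntegral.integral_nonneg hy fun _ ht =>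
    mul_nonneg (rpow_nonneg ht.1 _) (exp_nonneg _)

lemma lowerIncGamma_le_rpow_div (hb : 0 < b) {y : ℝ} (hy : 0 ≤ y) :
    lowerIncGamma b y ≤ y ^ b / b := by
  have hle : lowerIncGamma b y ≤ ∫ t in (0 : ℝ)..y, t ^ (b - 1) :=
    intervalIntegral.integral_mono_on hy (intervalIntegrable_rpow_mul_exp_neg hb 0 y)
      (intervalIntegral.intervalIntegrable_rpow' (by linarith)) fun t ht =>
        mul_le_of_le_one_right (rpow_nonneg ht.1 _) (exp_le_one_iff.2 (by linarith [ht.1]))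
  rwa [integral_rpow (Or.inl (by linarith)), sub_add_cancel, zero_rpow hb.ne', sub_zero] at hle

lemma lowerIncGamma_le_Gamma (hb : 0 < b) {y : ℝ} (hy : 0 ≤ y) :
    lowerIncGamma b y ≤ Real.Gamma b := by
  rw [Gamma_eq_integral hb, lowerIncGamma, intervalIntegral.integral_of_le hy]
  simp_rw [mul_comm _ (Real.exp _)]
  refine setIntegral_mono_set (GammaIntegral_convergent hb) ?_
    (Eventually.of_forall fun _ ht => ht.1)
  filter_upwards [ae_restrict_mem measurableSet_Ioi] with t ht
  exact mul_nonneg (exp_nonneg _) (rpow_nonneg (le_of_lt ht) _)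

lemma lowerIncGamma_isBigO_nhdsGT_zero (hb : 0 < b) :
    lowerIncGamma b =O[𝓝[>] 0] (· ^ b) := by
  refine IsBigO.of_bound b⁻¹ ?_
  filter_upwards [self_mem_nhdsWithin] with y (hy : 0 < y)
  rw [norm_of_nonneg (lowerIncGamma_nonneg hy.le), norm_of_nonneg (rpow_nonneg hy.le _),
    inv_mul_eq_div]
  exact lowerIncGamma_le_rpow_div hb hy.le

lemma lowerIncGamma_isBigO_atTop (hb : 0 < b) :
    lowerIncGamma b =O[atTop] (fun _ => (1 : ℝ)) := by
  refine IsBigO.of_bound (Real.Gamma b) ?_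
  filter_upwards [eventually_ge_atTop 0] with y hy
  rw [norm_of_nonneg (lowerIncGamma_nonneg hy), norm_one, mul_one]
  exact lowerIncGamma_le_Gamma hb hy

end LowerIncGamma

lemma tendsto_mul_cpow_of_isBigO {l : Filter ℝ} {f : ℝ → ℂ} {g : ℝ → ℝ} {s : ℂ}
    (hf : f =O[l] g) (hl : ∀ᶠ t in l, 0 < t) (hg : Tendsto (fun t => g t * t ^ s.re) l (𝓝 0)) :
    Tendsto (fun t => f t * (t : ℂ) ^ s) l (𝓝 0) := by
  have hpow : (fun t : ℝ => (t : ℂ) ^ s) =O[l] (fun t => t ^ s.re) :=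
    IsBigO.of_bound 1 <| hl.mono fun t ht => by
      rw [Complex.norm_cpow_eq_rpow_re_of_pos ht, norm_of_nonneg (rpow_nonneg ht.le _), one_mul]
  exact (hf.mul hpow).trans_tendsto hg

section MellinLowerIncGamma

variable {b : ℝ} {s : ℂ}

lemma tendsto_lowerIncGamma_mul_cpow_nhdsGT_zero (hb : 0 < b) (hsb : -b < s.re) :
    Tendsto (fun t => (lowerIncGamma b t : ℂ) * (t : ℂ) ^ s) (𝓝[>] 0) (𝓝 0) := by
  have hpow : Tendsto (fun t : ℝ => t ^ (b + s.re)) (𝓝[>] 0) (𝓝 0) := by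
    simpa [zero_rpow (by linarith : b + s.re ≠ 0)] using
      (continuousAt_rpow_const 0 (b + s.re) (Or.inr (by linarith))).tendsto.mono_left
        nhdsWithin_le_nhds
  refine tendsto_mul_cpow_of_isBigO
    (Complex.isBigO_ofReal_left.2 (lowerIncGamma_isBigO_nhdsGT_zero hb)) self_mem_nhdsWithin
    (hpow.congr' ?_)
  filter_upwards [self_mem_nhdsWithin] with t (ht : 0 < t) using rpow_add ht _ _

lemma tendsto_lowerIncGamma_mul_cpow_atTop (hb : 0 < b) (hs0 : s.re < 0) :
    Tendsto (fun t => (lowerIncGamma b t : ℂ) * (t : ℂ) ^ s) atTop (𝓝 0) :=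
  tendsto_mul_cpow_of_isBigO (Complex.isBigO_ofReal_left.2 (lowerIncGamma_isBigO_atTop hb))
    (eventually_gt_atTop 0) (by simpa using tendsto_rpow_neg_atTop (neg_pos.2 hs0))

lemma mellinConvergent_ofReal_lowerIncGamma (hb : 0 < b) (hsb : -b < s.re) (hs0 : s.re < 0) :
    MellinConvergent (fun t => (lowerIncGamma b t : ℂ)) s :=
  mellinConvergent_of_isBigO_rpow (a := 0) (b := -b)
    ((Complex.continuous_ofReal.comp (continuous_lowerIncGamma hb)).locallyIntegrable
      |>.locallyIntegrableOn _)
    ((Complex.isBigO_ofReal_left.2 (lowerIncGamma_isBigO_atTop hb)).congr_right fun _ => by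
      rw [neg_zero, rpow_zero]) hs0
    ((Complex.isBigO_ofReal_left.2 (lowerIncGamma_isBigO_nhdsGT_zero hb)).congr_right fun _ => by
      rw [neg_neg]) hsb

theorem mellin_ofReal_lowerIncGamma (hb : 0 < b) (hsb : -b < s.re) (hs0 : s.re < 0) :
    mellin (fun t => (lowerIncGamma b t : ℂ)) s = -Complex.Gamma (b + s) / s := by
  have hs : s ≠ 0 := fun h => by simp [h] at hs0
  have hbs : 0 < ((b : ℂ) + s).re := by simp only [Complex.add_re, Complex.ofReal_re]; linarith
  set u : ℝ → ℂ := fun t => (lowerIncGamma b t : ℂ)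
  set u' : ℝ → ℂ := fun t => ((t ^ (b - 1) * Real.exp (-t) : ℝ) : ℂ)
  set v : ℝ → ℂ := fun t => (t : ℂ) ^ s / s
  set v' : ℝ → ℂ := fun t => (t : ℂ) ^ (s - 1)
  have hu : ∀ t ∈ Ioi (0 : ℝ), HasDerivAt u (u' t) t := fun t ht =>
    (hasDerivAt_lowerIncGamma hb ht).ofReal_comp
  have hv : ∀ t ∈ Ioi (0 : ℝ), HasDerivAt v (v' t) t := fun t ht => by
    simpa using hasDerivAt_ofReal_cpow_const' (ne_of_gt ht) (r := s - 1) (by simpa using hs)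
  have hu'v : EqOn (u' * v) (fun t => (Real.exp (-t) : ℂ) * (t : ℂ) ^ (b + s - 1) / s) (Ioi 0) := by
    intro t ht
    have ht0 : (t : ℂ) ≠ 0 := Complex.ofReal_ne_zero.2 (ne_of_gt ht)
    simp only [Pi.mul_apply, u', v, Complex.ofReal_mul, Complex.ofReal_cpow (le_of_lt ht)]
    rw [add_sub_right_comm, Complex.cpow_add _ _ ht0]
    push_cast
    ring
  have h_uv' : IntegrableOn (u * v') (Ioi 0) :=
    (mellinConvergent_ofReal_lowerIncGamma hb hsb hs0).congr_fun (fun t _ => mul_comm _ _)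
      measurableSet_Ioi
  have h_u'v : IntegrableOn (u' * v) (Ioi 0) :=
    IntegrableOn.congr_fun ((Complex.GammaIntegral_convergent hbs).div_const s) hu'v.symm
      measurableSet_Ioi
  have h_zero : Tendsto (u * v) (𝓝[>] 0) (𝓝 0) := by
    simpa only [zero_div, Pi.mul_def, mul_div_assoc] using
      (tendsto_lowerIncGamma_mul_cpow_nhdsGT_zero hb hsb).div_const s
  have h_infty : Tendsto (u * v) atTop (𝓝 0) := by
    simpa only [zero_div, Pi.mul_def, mul_div_assoc] using
      (tendsto_lowerIncGamma_mul_cpow_atTop hb hs0).div_const s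
  calc mellin u s = ∫ t in Ioi 0, u t * v' t := by simp only [mellin, smul_eq_mul, v', mul_comm]
    _ = 0 - 0 - ∫ t in Ioi 0, (u' * v) t :=
      integral_Ioi_mul_deriv_eq_deriv_mul hu hv h_uv' h_u'v h_zero h_infty
    _ = -Complex.Gamma (b + s) / s := by
      rw [setIntegral_congr_fun measurableSet_Ioi hu'v, integral_div,
        Complex.Gamma_eq_integral hbs, Complex.GammaIntegral]
      ring

end MellinLowerIncGamma

/-- **Mellin-type transform of the lower incomplete Gamma function.**
For `a, b > 0` and `0 < Re(s) < b`,
`∫₀^∞ λ^{−s−1} γ̂(b, aλ) dλ = a^s Γ(b−s) / s`. -/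
theorem mellin_lowerIncGamma
    (a b : ℝ) (ha : 0 < a) (hb : 0 < b)
    (s : ℂ) (h0 : 0 < s.re) (hsb : s.re < b) :
    (∫ l in Set.Ioi (0 : ℝ), (l : ℂ) ^ (-s - 1) * (lowerIncGamma b (a * l) : ℂ))
      = (a : ℂ) ^ s * Complex.Gamma ((b : ℂ) - s) / s := by
  change mellin (fun l => (lowerIncGamma b (a * l) : ℂ)) (-s) = _
  rw [mellin_comp_mul_left (fun t => (lowerIncGamma b t : ℂ)) (-s) ha,
    mellin_ofReal_lowerIncGamma hb (by simpa) (by simpa), neg_neg, smul_eq_mul,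
    ← sub_eq_add_neg, neg_div_neg_eq, mul_div_assoc]
end

section
/- Let μ be a probability measure on [0,∞) (the law of the instantaneous SNR γ) such that x ↦ log(1+x) is μ-integrable, and let a > 0. Then ∫ log(1+x) dμ(x) = ∫₀^∞ (e^{−a u}/u) · (∫ (1 − e^{−a u x}) dμ(x)) du. This is the relationship C_avg(γ̄) = ∫₀^∞ (e^{−au}/u)·{1 − 2 E_avg(uγ̄)} du between the average channel capacity and the average bit error rate E_avg(uγ̄) = E[(1/2)e^{−auγ}] of non-coherent binary modulation schemes (a = 1/2 for non-coherent orthogonal FSK, a = 1 for differentially coherent antipodal PSK). -/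
/-!
Substituting `b = a (1 + x)` turns the inner integrand into the Frullani integrand
`(e^{-a u} - e^{-b u}) / u`, whose integral over `(0, ∞)` is `log (b / a) = log (1 + x)`.
Since that integrand is nonnegative and its `u`-integral `log (1 + x)` is `μ`-integrable,
Fubini–Tonelli lets the two integrals be exchanged.
-/

open MeasureTheory Real Set Filter Topology

theorem integral_integral_swap_of_nonneg {α β : Type*} [MeasurableSpace α] [MeasurableSpace β]
    {μ : Measure α} {ν : Measure β} [SFinite μ] [SFinite ν] {F : α → β → ℝ}
    (hF : AEStronglyMeasurable (Function.uncurry F) (μ.prod ν))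
    (hF_nonneg : ∀ᵐ x ∂μ, 0 ≤ᵐ[ν] F x) (hF_int : ∀ᵐ x ∂μ, Integrable (F x) ν)
    (hF_int_int : Integrable (fun x => ∫ y, F x y ∂ν) μ) :
    ∫ x, ∫ y, F x y ∂ν ∂μ = ∫ y, ∫ x, F x y ∂μ ∂ν := by
  refine integral_integral_swap ((integrable_prod_iff hF).2 ⟨hF_int, hF_int_int.congr ?_⟩)
  filter_upwards [hF_nonneg] with x hx
  refine integral_congr_ae ?_
  filter_upwards [hx] with y hy
  exact (Real.norm_of_nonneg hy).symm

section Kernel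

variable {a x u : ℝ}

theorem exp_neg_mul_div_mul_one_sub_exp_nonneg (ha : 0 ≤ a) (hx : 0 ≤ x) (hu : 0 ≤ u) :
    0 ≤ exp (-(a * u)) / u * (1 - exp (-(a * u * x))) := by
  have : exp (-(a * u * x)) ≤ 1 := exp_le_one_iff.2 (by simp only [neg_nonpos]; positivity)
  exact mul_nonneg (by positivity) (by linarith)

theorem exp_neg_mul_div_mul_one_sub_exp_le (hu : 0 < u) :
    exp (-(a * u)) / u * (1 - exp (-(a * u * x))) ≤ a * x * exp (-(a * u)) := by
  have hle : 1 - exp (-(a * u * x)) ≤ a * u * x := by linarith [add_one_le_exp (-(a * u * x))]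
  calc exp (-(a * u)) / u * (1 - exp (-(a * u * x)))
      ≤ exp (-(a * u)) / u * (a * u * x) := by gcongr
    _ = a * x * exp (-(a * u)) := by field_simp

theorem integrableOn_Ioi_exp_neg_mul_div_mul_one_sub_exp (ha : 0 < a) (hx : 0 ≤ x) :
    IntegrableOn (fun u => exp (-(a * u)) / u * (1 - exp (-(a * u * x)))) (Ioi 0) := by
  refine Integrable.mono' ((exp_neg_integrableOn_Ioi 0 ha).const_mul (a * x))
    (by fun_prop : Measurable _).aestronglyMeasurable ?_
  filter_upwards [ae_restrict_mem measurableSet_Ioi] with u (hu : 0 < u)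
  rw [Real.norm_of_nonneg (exp_neg_mul_div_mul_one_sub_exp_nonneg ha.le hx hu.le), neg_mul]
  exact exp_neg_mul_div_mul_one_sub_exp_le hu

theorem integral_Ioi_exp_neg_mul_div_mul_one_sub_exp (ha : 0 < a) (hx : 0 ≤ x) :
    ∫ u in Ioi 0, exp (-(a * u)) / u * (1 - exp (-(a * u * x))) = log (1 + x) := by
  have hb : 0 < a * (1 + x) := by positivity
  have hintegrand : (fun u => exp (-(a * u)) / u * (1 - exp (-(a * u * x))))
      = fun u => u⁻¹ • (exp (-(a * u)) - exp (-(a * (1 + x) * u))) := by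
    ext u
    rw [smul_eq_mul, show -(a * (1 + x) * u) = -(a * u) + -(a * u * x) by ring, exp_add]
    ring
  have hcont : Continuous fun t : ℝ => exp (-t) := by fun_prop
  have hlim_zero : Tendsto (fun t : ℝ => exp (-t)) (𝓝[>] 0) (𝓝 1) :=
    (hcont.tendsto' 0 1 (by simp)).mono_left nhdsWithin_le_nhds
  have hint := integrableOn_Ioi_exp_neg_mul_div_mul_one_sub_exp ha hx
  rw [hintegrand] at hint ⊢
  rw [Frullani.integral_Ioi_eq (hcont.locallyIntegrable.locallyIntegrableOn _) ha hb hlim_zero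
    tendsto_exp_neg_atTop_nhds_zero hint, mul_div_cancel_left₀ _ ha.ne', sub_zero, smul_eq_mul,
    mul_one]

end Kernel

/-- **Average channel capacity from the ABER of non-coherent binary
modulation.**  For the law `μ` of a nonnegative SNR with `log(1+·)`
μ-integrable and `a > 0`,
`E[log(1+γ)] = ∫₀^∞ (e^{−au}/u) E[1 − e^{−auγ}] du`,
i.e. `C_avg(γ̄) = ∫₀^∞ (e^{−au}/u) {1 − 2E_avg(uγ̄)} du`. -/
theorem average_capacity_from_aber_noncoherent
    (μ : Measure ℝ) [IsProbabilityMeasure μ] (hsupp : μ (Set.Iio 0) = 0)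
    (hlog : Integrable (fun x : ℝ => Real.log (1 + x)) μ)
    (a : ℝ) (ha : 0 < a) :
    (∫ x, Real.log (1 + x) ∂μ)
      = ∫ u in Set.Ioi (0 : ℝ),
          (Real.exp (-(a * u)) / u) * ∫ x, (1 - Real.exp (-(a * u * x))) ∂μ := by
  have hx_nonneg : ∀ᵐ x ∂μ, 0 ≤ x :=
    (measure_eq_zero_iff_ae_notMem.1 hsupp).mono fun _ hx => not_lt.1 hx
  have hlog_eq : ∀ᵐ x ∂μ, ∫ u in Ioi 0, exp (-(a * u)) / u * (1 - exp (-(a * u * x)))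
      = log (1 + x) :=
    hx_nonneg.mono fun x hx => integral_Ioi_exp_neg_mul_div_mul_one_sub_exp ha hx
  calc (∫ x, log (1 + x) ∂μ)
      = ∫ x, (∫ u in Ioi 0, exp (-(a * u)) / u * (1 - exp (-(a * u * x)))) ∂μ :=
        integral_congr_ae (hlog_eq.mono fun x hx => hx.symm)
    _ = ∫ u in Ioi 0, ∫ x, exp (-(a * u)) / u * (1 - exp (-(a * u * x))) ∂μ := by
        refine integral_integral_swap_of_nonneg
          (by fun_prop : Measurable fun p : ℝ × ℝ => _).aestronglyMeasurable ?_
          (hx_nonneg.mono fun x hx => integrableOn_Ioi_exp_neg_mul_div_mul_one_sub_exp ha hx)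
          (hlog.congr (hlog_eq.mono fun x hx => hx.symm))
        filter_upwards [hx_nonneg] with x hx
        filter_upwards [ae_restrict_mem measurableSet_Ioi] with u (hu : 0 < u)
        exact exp_neg_mul_div_mul_one_sub_exp_nonneg ha.le hx hu.le
    _ = _ := by simp only [integral_const_mul]
end

section
/- Let μ be a probability measure on [0,∞) (the law of the instantaneous SNR γ) such that x ↦ log(1+x) is μ-integrable, let γ_th > 0 be a threshold with μ({γ_th}) = 0. Then the outage probability satisfies μ([0, γ_th]) = 1 − (1/π) · ∫ Im(Log(1 − x/γ_th)) dμ(x), where Log is the principal branch of the complex logarithm (with imaginary part in (−π, π], so that Log of a negative real number has imaginary part π, matching the convention −γ̄ = e^{iπ}γ̄). In other words, P_out(γ̄; γ_th) = 1 − (1/π)·Im{C_avg(−γ̄/γ_th)}, where C_avg(−γ̄/γ_th) denotes the analytic continuation E[Log(1 − γ/γ_th)] of the average channel capacity C_avg(uγ̄) = E[log(1+uγ)] to the negative argument u = −1/γ_th. -/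
/-!
On the real axis the principal logarithm has imaginary part `π` exactly at negative arguments, so
`Im Log (1 - x / γ_th) = π · 1{x > γ_th}`. Its `μ`-integral is therefore `π · μ (γ_th, ∞)`, and the
outage event `[0, γ_th]` is, up to the null set `(-∞, 0)`, the complement of `(γ_th, ∞)`.
-/

open MeasureTheory Real Set

theorem Complex.arg_ofReal_eq_indicator (x : ℝ) :
    Complex.arg x = (Iio 0).indicator (fun _ => π) x := by
  by_cases hx : x < 0
  · rw [Complex.arg_ofReal_of_neg hx, indicator_of_mem (mem_Iio.2 hx)]
  · rw [Complex.arg_ofReal_of_nonneg (not_lt.mp hx),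
      indicator_of_notMem (notMem_Iio.2 (not_lt.mp hx))]

theorem Complex.log_one_sub_div_im {t : ℝ} (ht : 0 < t) (x : ℝ) :
    (Complex.log (1 - (x : ℂ) / (t : ℂ))).im = (Ioi t).indicator (fun _ => π) x := by
  have hcast : 1 - (x : ℂ) / (t : ℂ) = ((1 - x / t : ℝ) : ℂ) := by push_cast; ring
  have hneg : 1 - x / t < 0 ↔ t < x := by rw [sub_neg, one_lt_div ht]
  rw [hcast, Complex.log_im, Complex.arg_ofReal_eq_indicator]
  simp only [indicator_apply, mem_Iio, mem_Ioi, hneg]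

theorem integral_log_one_sub_div_im (μ : Measure ℝ) {t : ℝ} (ht : 0 < t) :
    ∫ x, (Complex.log (1 - (x : ℂ) / (t : ℂ))).im ∂μ = μ.real (Ioi t) * π := by
  simp_rw [Complex.log_one_sub_div_im ht]
  rw [integral_indicator_const π measurableSet_Ioi, smul_eq_mul]

theorem measure_Icc_eq_measure_Iic {μ : Measure ℝ} {a : ℝ} (h : μ (Iio a) = 0) (b : ℝ) :
    μ (Icc a b) = μ (Iic b) := by
  rw [← Iic_inter_Ici, measure_inter_conull (by rwa [compl_Ici])]

theorem outage_probability_from_average_capacity_general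
    (μ : Measure ℝ) [IsProbabilityMeasure μ] (hsupp : μ (Set.Iio 0) = 0)
    (γth : ℝ) (hγth : 0 < γth) :
    (μ (Set.Icc 0 γth)).toReal
      = 1 - (1 / π) * ∫ x, (Complex.log (1 - (x : ℂ) / (γth : ℂ))).im ∂μ := by
  rw [integral_log_one_sub_div_im μ hγth, measure_Icc_eq_measure_Iic hsupp, ← measureReal_def,
    ← compl_Ioi, probReal_compl_eq_one_sub measurableSet_Ioi]
  field_simp [pi_ne_zero]

/-- **Outage probability from the analytically continued average channel
capacity.**  For the law `μ` of a nonnegative SNR with `log(1+·)` μ-integrable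
and a threshold `γ_th > 0` that is not an atom of `μ`,
`P_out(γ̄; γ_th) = μ([0, γ_th]) = 1 − (1/π) Im{ E[Log(1 − γ/γ_th)] }`,
where `Log` is the principal branch of the complex logarithm. -/
theorem outage_probability_from_average_capacity
    (μ : Measure ℝ) [IsProbabilityMeasure μ] (hsupp : μ (Set.Iio 0) = 0)
    (hlog : Integrable (fun x : ℝ => Real.log (1 + x)) μ)
    (γth : ℝ) (hγth : 0 < γth) (hatom : μ {γth} = 0) :
    (μ (Set.Icc 0 γth)).toReal
      = 1 - (1 / π) * ∫ x, (Complex.log (1 - (x : ℂ) / (γth : ℂ))).im ∂μ :=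
  outage_probability_from_average_capacity_general μ hsupp γth hγth
end

section
/- Let f : ℝ → ℝ be a nonnegative measurable probability density vanishing on (−∞, 0) (so μ = f·Lebesgue is the law of a nonnegative SNR γ), and let r > 0 be a point at which f is continuous. Then the function ρ ↦ (1/π) · ∫₀^∞ Im(Log(1 − x/ρ)) · f(x) dx (which equals P(γ > ρ) = Im{C_avg(−γ̄/ρ)}/π) is differentiable at ρ = r with derivative −f(r); equivalently, the probability density of the SNR is recovered from the exact average channel capacity by f(r) = −(1/π) · (∂/∂r) Im{C_avg(−γ̄/r)}, where Log is the principal branch of the complex logarithm (imaginary part in (−π, π], equal to π on negative reals) and C_avg(−γ̄/r) = ∫₀^∞ Log(1 − x/r) f(x) dx. -/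
/-!
For `ρ > 0` the number `1 - x/ρ` is real, and negative exactly when `x > ρ`, so
`Im Log(1 - x/ρ) = π · 1_{x > ρ}`.  Hence `(1/π) ∫₀^∞ Im Log(1 - x/ρ) f(x) dx` is the tail
integral `∫_{(ρ,∞)} f`, and by the fundamental theorem of calculus its derivative at a point of
continuity `r` of `f` is `-f r`.
-/

open MeasureTheory Real Set Filter Topology

theorem Complex.im_log_one_sub_ofReal_div {ρ : ℝ} (hρ : 0 < ρ) (x : ℝ) :
    (Complex.log (1 - (x : ℂ) / (ρ : ℂ))).im = (Ioi ρ).indicator (fun _ => π) x := by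
  have hcast : (1 : ℂ) - (x : ℂ) / (ρ : ℂ) = ((1 - x / ρ : ℝ) : ℂ) := by push_cast; ring
  rw [hcast, Complex.log_im]
  by_cases hx : x ∈ Ioi ρ
  · rw [indicator_of_mem hx, Complex.arg_ofReal_of_neg]
    rwa [sub_neg, one_lt_div hρ]
  · rw [indicator_of_notMem hx, Complex.arg_ofReal_of_nonneg]
    rwa [sub_nonneg, div_le_one hρ, ← not_lt]

theorem setIntegral_Ioi_zero_im_log_one_sub_ofReal_div_mul {ρ : ℝ} (hρ : 0 < ρ) (g : ℝ → ℝ) :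
    ∫ x in Ioi (0 : ℝ), (Complex.log (1 - (x : ℂ) / (ρ : ℂ))).im * g x =
      π * ∫ x in Ioi ρ, g x := by
  simp_rw [Complex.im_log_one_sub_ofReal_div hρ, ← indicator_mul_left]
  rw [integral_indicator measurableSet_Ioi, Measure.restrict_restrict measurableSet_Ioi,
    Ioi_inter_Ioi, max_eq_left hρ.le, integral_const_mul]

theorem hasDerivAt_setIntegral_Ioi {f : ℝ → ℝ} {a b : ℝ} (hab : a < b)
    (hf : IntegrableOn f (Ioi a)) (hb : ContinuousAt f b) :
    HasDerivAt (fun ρ => ∫ x in Ioi ρ, f x) (-f b) b := by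
  have hf_ab : IntervalIntegrable f volume a b :=
    (intervalIntegrable_iff_integrableOn_Ioc_of_le hab.le).2 (hf.mono_set Ioc_subset_Ioi_self)
  have hmeas : StronglyMeasurableAtFilter f (𝓝 b) :=
    AEStronglyMeasurable.stronglyMeasurableAtFilter_of_mem hf.aestronglyMeasurable
      (Ioi_mem_nhds hab)
  have htail : (fun ρ => (∫ x in Ioi a, f x) - ∫ x in a..ρ, f x) =ᶠ[𝓝 b]
      fun ρ => ∫ x in Ioi ρ, f x := by
    filter_upwards [eventually_gt_nhds hab] with ρ hρ
    rw [← intervalIntegral.integral_Ioi_sub_Ioi hf hρ.le, sub_sub_cancel]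
  exact ((intervalIntegral.integral_hasDerivAt_right hf_ab hmeas hb).const_sub _)
    |>.congr_of_eventuallyEq htail.symm

theorem snr_density_from_average_capacity_general
    (f : ℝ → ℝ) (hprob : (∫ x, f x) = 1)
    (r : ℝ) (hr : 0 < r) (hcont : ContinuousAt f r) :
    HasDerivAt
      (fun ρ : ℝ => (1 / π) *
        ∫ x in Set.Ioi (0 : ℝ), (Complex.log (1 - (x : ℂ) / (ρ : ℂ))).im * f x)
      (-f r) r := by
  have hint : Integrable f := Integrable.of_integral_ne_zero (by simp [hprob])
  have htail : (fun ρ => ∫ x in Ioi ρ, f x) =ᶠ[𝓝 r] fun ρ : ℝ => (1 / π) *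
      ∫ x in Ioi (0 : ℝ), (Complex.log (1 - (x : ℂ) / (ρ : ℂ))).im * f x := by
    filter_upwards [eventually_gt_nhds hr] with ρ hρ
    rw [setIntegral_Ioi_zero_im_log_one_sub_ofReal_div_mul hρ, one_div,
      inv_mul_cancel_left₀ pi_ne_zero]
  exact (hasDerivAt_setIntegral_Ioi hr hint.integrableOn hcont).congr_of_eventuallyEq htail.symm

/-- **Recovering the SNR density from the exact average channel capacity.**
Let `f` be a nonnegative measurable probability density vanishing on
`(−∞, 0)` and continuous at `r > 0`.  Then
`ρ ↦ (1/π) ∫₀^∞ Im(Log(1 − x/ρ)) f(x) dx` (the complementary outage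
probability `P(γ > ρ)`) is differentiable at `ρ = r` with derivative `−f(r)`;
i.e. `f(r) = −(1/π) ∂/∂r Im{C_avg(−γ̄/r)}`. -/
theorem snr_density_from_average_capacity
    (f : ℝ → ℝ) (hf : Measurable f) (hnn : ∀ x, 0 ≤ f x)
    (hzero : ∀ x < (0 : ℝ), f x = 0) (hprob : (∫ x, f x) = 1)
    (r : ℝ) (hr : 0 < r) (hcont : ContinuousAt f r) :
    HasDerivAt
      (fun ρ : ℝ => (1 / π) *
        ∫ x in Set.Ioi (0 : ℝ), (Complex.log (1 - (x : ℂ) / (ρ : ℂ))).im * f x)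
      (-f r) r :=
  snr_density_from_average_capacity_general f hprob r hr hcont
end
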